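/- arXiv:2311.06277 — 3 statements merged into one kernel-verified Lean document; each statement's English description precedes it below -/
import Mathlib

section
/- Let ω ∈ 𝓑'₀ have power series expansion ω(z) = c₁z + c₂z² + c₃z³ + ⋯ on 𝔻. Then |c₃| ≤ (1/3)·(1 − |c₁|² − 4|c₂|²/(1 + |c₁|)). -/
/-!
With `f = ω'`, which maps the unit disc into the closed unit disc and has Taylor coefficients
`c₁, 2c₂, 3c₃` at `0`, the claim is Schur's bound `|a₂| ≤ 1 - |a₀|² - |a₁|² / (1 + |a₀|)` for the
Taylor coefficients of such an `f`.

If `|f 0| < 1`, the Schur transform `g z = (f z - f 0) / (z (1 - conj (f 0) f z))` is again bounded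
by `1`: this is the Schwarz lemma for the Möbius-normalised map `(f - f 0) / (1 - conj (f 0) f)`,
which vanishes at `0`. Evaluating `g` at `0` gives the Schwarz–Pick bound `|a₁| ≤ 1 - |a₀|²`;
applying that bound to `g` itself, whose value and derivative at `0` are explicit in `a₀, a₁, a₂`,
gives Schur's bound after one triangle inequality. If `|f 0| = 1`, then `f` is constant by the
maximum modulus principle.
-/

open Complex Metric

open scoped ComplexConjugate Nat Topology

section Taylor

variable {𝕜 : Type*} [NontriviallyNormedField 𝕜] [CompleteSpace 𝕜] [CharZero 𝕜] {f : 𝕜 → 𝕜}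

theorem eq_iteratedDeriv_div_factorial_of_hasSum {a : ℕ → 𝕜}
    (h : ∀ᶠ z in 𝓝 0, HasSum (fun n ↦ a n * z ^ n) (f z)) (n : ℕ) :
    a n = iteratedDeriv n f 0 / n ! := by
  have hp : HasFPowerSeriesAt f (FormalMultilinearSeries.ofScalars 𝕜 a) 0 := by
    rw [hasFPowerSeriesAt_iff]
    simpa only [FormalMultilinearSeries.coeff_ofScalars, smul_eq_mul, mul_comm, zero_add] using h
  have := hp.eq_formalMultilinearSeries hp.analyticAt.hasFPowerSeriesAt
  exact congrFun (FormalMultilinearSeries.ofScalars_series_injective 𝕜 𝕜 this) n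

theorem AnalyticAt.deriv_dslope_same {x : 𝕜} (hf : AnalyticAt 𝕜 f x) :
    deriv (dslope f x) x = iteratedDeriv 2 f x / 2 := by
  rw [hf.hasFPowerSeriesAt.has_fpower_series_dslope_fslope.deriv]
  simp

end Taylor

theorem norm_sub_le_norm_one_sub_conj_mul {a w : ℂ} (ha : ‖a‖ ≤ 1) (hw : ‖w‖ ≤ 1) :
    ‖w - a‖ ≤ ‖1 - conj a * w‖ := by
  have hdiff_sq : ‖1 - conj a * w‖ ^ 2 - ‖w - a‖ ^ 2 = (1 - ‖a‖ ^ 2) * (1 - ‖w‖ ^ 2) := by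
    simp only [Complex.sq_norm, Complex.normSq_apply, Complex.sub_re, Complex.sub_im,
      Complex.mul_re, Complex.mul_im, Complex.one_re, Complex.one_im, Complex.conj_re,
      Complex.conj_im]
    ring
  have : 0 ≤ (1 - ‖a‖ ^ 2) * (1 - ‖w‖ ^ 2) := by
    apply mul_nonneg <;> nlinarith [norm_nonneg a, norm_nonneg w]
  exact (pow_le_pow_iff_left₀ (norm_nonneg _) (norm_nonneg _) two_ne_zero).1 (by linarith)

theorem one_sub_conj_mul_ne_zero {a w : ℂ} (ha : ‖a‖ < 1) (hw : ‖w‖ ≤ 1) :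
    1 - conj a * w ≠ 0 := by
  rw [sub_ne_zero]
  intro h
  have := congrArg norm h
  rw [norm_one, norm_mul, Complex.norm_conj] at this
  nlinarith [norm_nonneg a, norm_nonneg w]

theorem dslope_sub_smul_self {𝕜 E : Type*} [NontriviallyNormedField 𝕜] [NormedAddCommGroup E]
    [NormedSpace 𝕜 E] {g : 𝕜 → E} {c : 𝕜} (hg : DifferentiableAt 𝕜 g c) :
    dslope (fun z ↦ (z - c) • g z) c = g := by
  ext z
  rcases eq_or_ne z c with rfl | hne
  · rw [dslope_same, deriv_fun_smul (differentiableAt_fun_id.sub_const z) hg]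
    simp
  · rw [dslope_of_ne _ hne, slope_def_module]
    simp [smul_smul, inv_mul_cancel₀ (sub_ne_zero.2 hne)]

theorem eventuallyEq_const_of_norm_eq_one {f : ℂ → ℂ} (hf : DifferentiableOn ℂ f (ball 0 1))
    (hb : ∀ z ∈ ball (0 : ℂ) 1, ‖f z‖ ≤ 1) (h1 : ‖f 0‖ = 1) : f =ᶠ[𝓝 0] fun _ ↦ f 0 :=
  Filter.eventuallyEq_of_mem (isOpen_ball.mem_nhds (mem_ball_self one_pos)) <|
    Complex.eq_const_of_exists_max hf (mem_ball_self one_pos) fun z hz ↦ (hb z hz).trans h1.ge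

noncomputable def schurTransform (f : ℂ → ℂ) (z : ℂ) : ℂ :=
  dslope f 0 z / (1 - conj (f 0) * f z)

section SchurTransform

variable {f : ℂ → ℂ}

theorem differentiableOn_schurTransform (hf : DifferentiableOn ℂ f (ball 0 1))
    (hb : ∀ z ∈ ball (0 : ℂ) 1, ‖f z‖ ≤ 1) (ha : ‖f 0‖ < 1) :
    DifferentiableOn ℂ (schurTransform f) (ball 0 1) :=
  ((differentiableOn_dslope (isOpen_ball.mem_nhds (mem_ball_self one_pos))).2 hf).div
    ((differentiableOn_const _).sub ((differentiableOn_const _).mul hf))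
    fun z hz ↦ one_sub_conj_mul_ne_zero ha (hb z hz)

theorem norm_schurTransform_le_one (hf : DifferentiableOn ℂ f (ball 0 1))
    (hb : ∀ z ∈ ball (0 : ℂ) 1, ‖f z‖ ≤ 1) (ha : ‖f 0‖ < 1) {z : ℂ} (hz : z ∈ ball 0 1) :
    ‖schurTransform f z‖ ≤ 1 := by
  set g : ℂ → ℂ := fun z ↦ (f z - f 0) / (1 - conj (f 0) * f z)
  have hg : g = fun z ↦ (z - 0) • schurTransform f z := by
    ext z
    rw [schurTransform, smul_eq_mul, ← mul_div_assoc, ← smul_eq_mul, sub_smul_dslope]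
  have hmaps : Set.MapsTo g (ball 0 1) (closedBall (g 0) 1) := fun w hw ↦ by
    rw [mem_closedBall, show g 0 = 0 by simp [g], dist_zero_right, norm_div]
    exact div_le_one_of_le₀ (norm_sub_le_norm_one_sub_conj_mul ha.le (hb w hw)) (norm_nonneg _)
  have hgd : DifferentiableOn ℂ g (ball 0 1) :=
    (hf.sub_const _).div ((differentiableOn_const _).sub ((differentiableOn_const _).mul hf))
      fun w hw ↦ one_sub_conj_mul_ne_zero ha (hb w hw)
  have hdiff : DifferentiableAt ℂ (schurTransform f) 0 :=
    (differentiableOn_schurTransform hf hb ha).differentiableAt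
      (isOpen_ball.mem_nhds (mem_ball_self one_pos))
  have := Complex.norm_dslope_le_div_of_mapsTo_ball hgd hmaps hz
  rwa [hg, dslope_sub_smul_self hdiff, div_one] at this

theorem one_sub_conj_mul_self (a : ℂ) : 1 - conj a * a = ((1 - ‖a‖ ^ 2 : ℝ) : ℂ) := by
  rw [Complex.conj_mul']
  push_cast
  rfl

theorem schurTransform_zero :
    schurTransform f 0 = deriv f 0 / ((1 - ‖f 0‖ ^ 2 : ℝ) : ℂ) := by
  rw [schurTransform, dslope_same, one_sub_conj_mul_self]

theorem deriv_schurTransform_zero (hf : DifferentiableOn ℂ f (ball 0 1)) (ha : ‖f 0‖ < 1) :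
    deriv (schurTransform f) 0 =
      (deriv (dslope f 0) 0 * ((1 - ‖f 0‖ ^ 2 : ℝ) : ℂ) + conj (f 0) * deriv f 0 ^ 2) /
        ((1 - ‖f 0‖ ^ 2 : ℝ) : ℂ) ^ 2 := by
  have h0 : ball (0 : ℂ) 1 ∈ 𝓝 0 := isOpen_ball.mem_nhds (mem_ball_self one_pos)
  have hs : ((1 - ‖f 0‖ ^ 2 : ℝ) : ℂ) ≠ 0 := by
    norm_cast
    nlinarith [norm_nonneg (f 0)]
  have hnum : HasDerivAt (dslope f 0) (deriv (dslope f 0) 0) 0 :=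
    (((differentiableOn_dslope h0).2 hf).differentiableAt h0).hasDerivAt
  have hden : HasDerivAt (fun z ↦ 1 - conj (f 0) * f z) (-(conj (f 0) * deriv f 0)) 0 :=
    (((hf.differentiableAt h0).hasDerivAt).const_mul _).const_sub 1
  rw [← one_sub_conj_mul_self] at hs
  have hderiv := (hnum.div hden hs).deriv
  rw [dslope_same, one_sub_conj_mul_self] at hderiv
  change deriv (dslope f 0 / fun z ↦ 1 - conj (f 0) * f z) 0 = _
  rw [hderiv]
  field_simp
  ring

theorem norm_deriv_le_one_sub_sq (hf : DifferentiableOn ℂ f (ball 0 1))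
    (hb : ∀ z ∈ ball (0 : ℂ) 1, ‖f z‖ ≤ 1) : ‖deriv f 0‖ ≤ 1 - ‖f 0‖ ^ 2 := by
  rcases (hb 0 (mem_ball_self one_pos)).lt_or_eq with ha | ha
  · have hs : 0 < 1 - ‖f 0‖ ^ 2 := by nlinarith [norm_nonneg (f 0)]
    have := norm_schurTransform_le_one hf hb ha (mem_ball_self one_pos)
    rwa [schurTransform_zero, norm_div, Complex.norm_real, Real.norm_of_nonneg hs.le,
      div_le_one hs] at this
  · rw [(eventuallyEq_const_of_norm_eq_one hf hb ha).deriv_eq, ha]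
    simp

theorem norm_iteratedDeriv_two_div_two_le (hf : DifferentiableOn ℂ f (ball 0 1))
    (hb : ∀ z ∈ ball (0 : ℂ) 1, ‖f z‖ ≤ 1) :
    ‖iteratedDeriv 2 f 0 / 2‖ ≤ 1 - ‖f 0‖ ^ 2 - ‖deriv f 0‖ ^ 2 / (1 + ‖f 0‖) := by
  have h0 : ball (0 : ℂ) 1 ∈ 𝓝 0 := isOpen_ball.mem_nhds (mem_ball_self one_pos)
  rcases (hb 0 (mem_ball_self one_pos)).lt_or_eq with ha | ha
  · rw [← (hf.analyticAt h0).deriv_dslope_same]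
    have hS := norm_deriv_le_one_sub_sq (differentiableOn_schurTransform hf hb ha)
      fun z hz ↦ norm_schurTransform_le_one hf hb ha hz
    rw [deriv_schurTransform_zero hf ha, schurTransform_zero] at hS
    set a := f 0
    set b := deriv f 0
    set d := deriv (dslope f 0) 0
    set s : ℝ := 1 - ‖a‖ ^ 2 with hs_def
    have hs : 0 < s := by nlinarith [norm_nonneg a]
    simp only [norm_div, norm_pow, Complex.norm_real, Real.norm_of_nonneg hs.le] at hS
    rw [le_sub_iff_add_le, div_pow, ← add_div, div_le_one (by positivity)] at hS
    have htriangle : ‖d‖ * s ≤ s ^ 2 - ‖b‖ ^ 2 + ‖a‖ * ‖b‖ ^ 2 :=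
      calc ‖d‖ * s = ‖(d * s + conj a * b ^ 2) - conj a * b ^ 2‖ := by
            rw [add_sub_cancel_right, norm_mul, Complex.norm_real, Real.norm_of_nonneg hs.le]
        _ ≤ ‖d * s + conj a * b ^ 2‖ + ‖conj a * b ^ 2‖ := norm_sub_le _ _
        _ ≤ s ^ 2 - ‖b‖ ^ 2 + ‖a‖ * ‖b‖ ^ 2 := by
            rw [norm_mul, norm_pow, Complex.norm_conj]
            linarith
    have h1a : 0 < 1 + ‖a‖ := by positivity
    rw [le_sub_iff_add_le, add_div' _ _ _ h1a.ne', div_le_iff₀ h1a]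
    -- `s = (1 - ‖a‖) (1 + ‖a‖)`
    refine le_of_mul_le_mul_right ?_ (sub_pos.2 ha)
    linear_combination htriangle + ‖d‖ * hs_def
  · have hconst := eventuallyEq_const_of_norm_eq_one hf hb ha
    rw [hconst.iteratedDeriv_eq, hconst.deriv_eq, iteratedDeriv_const, ha]
    simp

end SchurTransform

theorem stmt_3_general (ω : ℂ → ℂ) (c : ℕ → ℂ)
    (hd : DifferentiableOn ℂ ω (ball 0 1))
    (hb : ∀ z ∈ ball (0:ℂ) 1, ‖deriv ω z‖ ≤ 1)
    (hc : ∀ z ∈ ball (0:ℂ) 1, HasSum (fun n : ℕ => c (n + 1) * z ^ (n + 1)) (ω z)) :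
    ‖c 3‖ ≤ (1/3) * (1 - ‖c 1‖^2 - 4 * ‖c 2‖^2 / (1 + ‖c 1‖)) := by
  have hseries : ∀ᶠ z in 𝓝 0, HasSum (fun n ↦ Function.update c 0 0 n * z ^ n) (ω z) := by
    filter_upwards [isOpen_ball.mem_nhds (mem_ball_self one_pos)] with z hz
    exact (hasSum_nat_add_iff' 1).1 (by simpa using hc z hz)
  have hcoeff (n : ℕ) (hn : n ≠ 0) : c n = iteratedDeriv n ω 0 / n ! := by
    simpa [hn] using eq_iteratedDeriv_div_factorial_of_hasSum hseries n
  have hschur := norm_iteratedDeriv_two_div_two_le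
    (hd.analyticOnNhd isOpen_ball).deriv.differentiableOn hb
  have hc1 : c 1 = deriv ω 0 := by simpa using hcoeff 1 one_ne_zero
  have hc2 : c 2 = deriv (deriv ω) 0 / 2 := by
    simpa [iteratedDeriv_succ'] using hcoeff 2 two_ne_zero
  have hc3 : c 3 = iteratedDeriv 2 (deriv ω) 0 / 2 / 3 := by
    rw [hcoeff 3 three_ne_zero, iteratedDeriv_succ', div_div]
    norm_num [Nat.factorial]
  rw [hc1, hc2, hc3, norm_div _ (3 : ℂ), norm_div (deriv (deriv ω) 0), RCLike.norm_ofNat,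
    RCLike.norm_ofNat, show ∀ x y : ℝ, 4 * (x / 2) ^ 2 / y = x ^ 2 / y by intros; ring]
  linarith

theorem stmt_3 (ω : ℂ → ℂ) (c : ℕ → ℂ)
    (hd : DifferentiableOn ℂ ω (ball 0 1))
    (h0 : ω 0 = 0)
    (hb : ∀ z ∈ ball (0:ℂ) 1, ‖deriv ω z‖ ≤ 1)
    (hc : ∀ z ∈ ball (0:ℂ) 1, HasSum (fun n : ℕ => c (n + 1) * z ^ (n + 1)) (ω z)) :
    ‖c 3‖ ≤ (1/3) * (1 - ‖c 1‖^2 - 4 * ‖c 2‖^2 / (1 + ‖c 1‖)) :=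
  stmt_3_general ω c hd hb hc
end

section
/- Fix t with 4/7 ≤ t ≤ 1 and define ω₂(z) = ∫₀^z (t + w)/(1 + tw) dw for z ∈ 𝔻. Then ω₂ ∈ 𝓑'₀, its power series coefficients satisfy c₁ = t, c₂ = (1/2)(1 − t²), c₃ = −(1/3)t(1 − t²), and equality |c₃ − c₁c₂| = (5/6)·t·(1 − t²) holds, so the bound of Theorem 1 is sharp for 4/7 ≤ |c₁| ≤ 1. -/
/-!
For real `t ∈ [-1, 1]` the integrand `(t + w) / (1 + t w)` maps the unit disk into itself, since
`|1 + t w|² - |t + w|² = (1 - t²)(1 - |w|²)`; this gives `|ω₂'| ≤ 1`. Writing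
`(t + w) / (1 + t w) = 1 / t + (t² - 1) / t² · t / (1 + t w)` integrates the segment integral
in closed form to `z / t + (t² - 1) / t² · log (1 + t z)`, whose Taylor series is that of the
logarithm, giving `c₁ = t` and `cₙ = (1 - t²)(-t)ⁿ⁻² / n` for `n ≥ 2`.
-/

open Complex Metric Set

theorem intervalIntegral_mul_eq_sub_of_hasDerivAt {U : Set ℂ} (hU : StarConvex ℝ 0 U)
    {F f : ℂ → ℂ} (hF : ∀ w ∈ U, HasDerivAt F (f w) w) (hf : ContinuousOn f U)
    {z : ℂ} (hz : z ∈ U) :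
    ∫ s in (0:ℝ)..1, f (s * z) * z = F z - F 0 := by
  have hseg : ∀ s ∈ uIcc (0:ℝ) 1, (s : ℂ) * z ∈ U := by
    intro s hs
    rw [uIcc_of_le zero_le_one] at hs
    exact real_smul (x := s) ▸ hU.smul_mem hz hs.1 hs.2
  have hderiv : ∀ s ∈ uIcc (0:ℝ) 1,
      HasDerivAt (fun u : ℝ => F (u * z)) (f (s * z) * z) s := fun s hs =>
    ((hF _ (hseg s hs)).comp (s : ℂ) (hasDerivAt_mul_const z)).comp_ofReal
  have hcont : ContinuousOn (fun s : ℝ => f (s * z) * z) (uIcc 0 1) :=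
    (hf.comp (by fun_prop) hseg).mul continuousOn_const
  rw [intervalIntegral.integral_eq_sub_of_hasDerivAt hderiv hcont.intervalIntegrable]
  simp

theorem normSq_one_add_mul_sub_normSq_add (t : ℝ) (z : ℂ) :
    normSq (1 + t * z) - normSq (t + z) = (1 - t ^ 2) * (1 - normSq z) := by
  simp only [normSq_apply, add_re, add_im, mul_re, mul_im, ofReal_re, ofReal_im, one_re, one_im]
  ring

theorem norm_add_le_norm_one_add_mul {t : ℝ} (ht : |t| ≤ 1) {z : ℂ} (hz : ‖z‖ ≤ 1) :
    ‖t + z‖ ≤ ‖1 + t * z‖ := by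
  have h := normSq_one_add_mul_sub_normSq_add t z
  have ht2 : 0 ≤ 1 - t ^ 2 := by nlinarith [sq_abs t, abs_nonneg t]
  have hz2 : 0 ≤ 1 - normSq z := by
    rw [normSq_eq_norm_sq]; nlinarith [norm_nonneg z]
  rw [← sq_le_sq₀ (norm_nonneg _) (norm_nonneg _), ← normSq_eq_norm_sq, ← normSq_eq_norm_sq]
  nlinarith [mul_nonneg ht2 hz2]

theorem norm_ofReal_mul_lt_one {t : ℝ} (ht : |t| ≤ 1) {z : ℂ} (hz : ‖z‖ < 1) :
    ‖(t : ℂ) * z‖ < 1 := by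
  rw [norm_mul, norm_real, Real.norm_eq_abs]
  nlinarith [abs_nonneg t, norm_nonneg z]

theorem one_add_mul_mem_slitPlane {t : ℝ} (ht : |t| ≤ 1) {z : ℂ} (hz : ‖z‖ < 1) :
    1 + (t : ℂ) * z ∈ slitPlane :=
  mem_slitPlane_of_norm_lt_one (norm_ofReal_mul_lt_one ht hz)

theorem norm_mobius_le_one {t : ℝ} (ht : |t| ≤ 1) {z : ℂ} (hz : ‖z‖ < 1) :
    ‖(t + z) / (1 + t * z)‖ ≤ 1 := by
  have hne := slitPlane_ne_zero (one_add_mul_mem_slitPlane ht hz)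
  rw [norm_div, div_le_one (norm_pos_iff.mpr hne)]
  exact norm_add_le_norm_one_add_mul ht hz.le

noncomputable def mobiusPrimitive (t : ℝ) (z : ℂ) : ℂ :=
  z / t + ((t : ℂ) ^ 2 - 1) / (t : ℂ) ^ 2 * log (1 + t * z)

theorem hasDerivAt_mobiusPrimitive {t : ℝ} (ht : t ≠ 0) {z : ℂ}
    (hz : 1 + (t : ℂ) * z ∈ slitPlane) :
    HasDerivAt (mobiusPrimitive t) ((t + z) / (1 + t * z)) z := by
  have ht' : (t : ℂ) ≠ 0 := ofReal_ne_zero.mpr ht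
  have hne : 1 + (t : ℂ) * z ≠ 0 := slitPlane_ne_zero hz
  have hinner : HasDerivAt (fun w : ℂ => 1 + t * w) t z := by
    simpa using ((hasDerivAt_id z).const_mul (t : ℂ)).const_add 1
  refine (((hasDerivAt_id z).div_const (t : ℂ)).add
    (((hasDerivAt_log hz).comp z hinner).const_mul _)).congr_deriv ?_
  field_simp
  ring

theorem mobiusPrimitive_zero (t : ℝ) : mobiusPrimitive t 0 = 0 := by
  simp [mobiusPrimitive]

theorem continuousOn_mobius {t : ℝ} (ht : |t| ≤ 1) :
    ContinuousOn (fun w : ℂ => (t + w) / (1 + t * w)) (ball 0 1) :=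
  (continuousOn_const.add continuousOn_id).div (continuousOn_const.add
    (continuousOn_const.mul continuousOn_id)) fun _ hw =>
      slitPlane_ne_zero (one_add_mul_mem_slitPlane ht (mem_ball_zero_iff.mp hw))

theorem intervalIntegral_mobius_eq_mobiusPrimitive {t : ℝ} (ht0 : t ≠ 0) (ht : |t| ≤ 1)
    {z : ℂ} (hz : z ∈ ball (0:ℂ) 1) :
    ∫ s in (0:ℝ)..1, ((t + s * z) / (1 + t * (s * z))) * z = mobiusPrimitive t z := by
  rw [intervalIntegral_mul_eq_sub_of_hasDerivAt
    ((convex_ball 0 1).starConvex (mem_ball_self one_pos))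
    (fun w hw => hasDerivAt_mobiusPrimitive ht0
      (one_add_mul_mem_slitPlane ht (mem_ball_zero_iff.mp hw)))
    (continuousOn_mobius ht) hz,
    mobiusPrimitive_zero, sub_zero]

noncomputable def mobiusPrimitiveCoeff (t : ℝ) : ℕ → ℂ
  | 0 => 0
  | 1 => t
  | n + 2 => (1 - (t : ℂ) ^ 2) * (-(t : ℂ)) ^ n / (n + 2)

theorem hasSum_mobiusPrimitiveCoeff {t : ℝ} (ht0 : t ≠ 0) {z : ℂ}
    (hz : ‖(t : ℂ) * z‖ < 1) :
    HasSum (fun n : ℕ => mobiusPrimitiveCoeff t (n + 1) * z ^ (n + 1)) (mobiusPrimitive t z) := by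
  have hlog := (hasSum_nat_add_iff' 1).mpr
    ((hasSum_taylorSeries_log hz).mul_left (((t : ℂ) ^ 2 - 1) / (t : ℂ) ^ 2))
  simp only [Finset.sum_range_one, pow_zero, CharP.cast_eq_zero, div_zero, mul_zero,
    sub_zero] at hlog
  have ht' : (t : ℂ) ≠ 0 := ofReal_ne_zero.mpr ht0
  rw [mobiusPrimitive]
  convert (hasSum_ite_eq 0 (z / t)).add hlog using 2 with n
  rcases n with _ | n
  · simp only [mobiusPrimitiveCoeff, if_true]
    field_simp
    ring
  · have hn : (2 : ℂ) + n ≠ 0 := by norm_cast; omega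
    simp only [mobiusPrimitiveCoeff, if_neg n.succ_ne_zero, zero_add]
    push_cast
    field_simp
    ring

theorem norm_mobiusPrimitiveCoeff_three_sub {t : ℝ} (ht0 : 0 ≤ t) (ht1 : t ≤ 1) :
    ‖mobiusPrimitiveCoeff t 3 - mobiusPrimitiveCoeff t 1 * mobiusPrimitiveCoeff t 2‖
      = 5 / 6 * t * (1 - t ^ 2) := by
  have h : mobiusPrimitiveCoeff t 3 - mobiusPrimitiveCoeff t 1 * mobiusPrimitiveCoeff t 2
      = ((-(5 / 6 * t * (1 - t ^ 2)) : ℝ) : ℂ) := by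
    simp only [mobiusPrimitiveCoeff]; push_cast; ring
  rw [h, norm_real, Real.norm_eq_abs, abs_neg, abs_of_nonneg (by nlinarith)]

theorem stmt_7 (t : ℝ) (ht0 : 4/7 ≤ t) (ht1 : t ≤ 1)
    (ω₂ : ℂ → ℂ)
    (hω₂ : ω₂ = fun z : ℂ =>
      ∫ s in (0:ℝ)..1, (((t : ℂ) + (s : ℂ) * z) / (1 + (t : ℂ) * ((s : ℂ) * z))) * z) :
    DifferentiableOn ℂ ω₂ (ball 0 1) ∧ ω₂ 0 = 0 ∧
    (∀ z ∈ ball (0:ℂ) 1, ‖deriv ω₂ z‖ ≤ 1) ∧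
    ∃ c : ℕ → ℂ,
      (∀ z ∈ ball (0:ℂ) 1, HasSum (fun n : ℕ => c (n + 1) * z ^ (n + 1)) (ω₂ z)) ∧
      c 1 = (t : ℂ) ∧ c 2 = (1 - (t : ℂ)^2) / 2 ∧ c 3 = -((t : ℂ) * (1 - (t : ℂ)^2)) / 3 ∧
      ‖c 3 - c 1 * c 2‖ = (5/6) * t * (1 - t^2) := by
  have ht : |t| ≤ 1 := abs_le.mpr ⟨by linarith, ht1⟩
  have ht' : t ≠ 0 := by positivity
  have hω : ∀ z ∈ ball (0:ℂ) 1, ω₂ z = mobiusPrimitive t z := fun z hz =>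
    hω₂ ▸ intervalIntegral_mobius_eq_mobiusPrimitive ht' ht hz
  have hderiv : ∀ z ∈ ball (0:ℂ) 1, HasDerivAt ω₂ ((t + z) / (1 + t * z)) z := fun z hz =>
    (hasDerivAt_mobiusPrimitive ht' (one_add_mul_mem_slitPlane ht (mem_ball_zero_iff.mp hz)))
      |>.congr_of_eventuallyEq (Filter.eventually_of_mem (isOpen_ball.mem_nhds hz) hω)
  refine ⟨fun z hz => (hderiv z hz).differentiableAt.differentiableWithinAt, by simp [hω₂],
    fun z hz => ?_, mobiusPrimitiveCoeff t, fun z hz => ?_, rfl, ?_, ?_,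
    norm_mobiusPrimitiveCoeff_three_sub (by linarith) ht1⟩
  · exact (hderiv z hz).deriv ▸ norm_mobius_le_one ht (mem_ball_zero_iff.mp hz)
  · exact hω z hz ▸
      hasSum_mobiusPrimitiveCoeff ht' (norm_ofReal_mul_lt_one ht (mem_ball_zero_iff.mp hz))
  · simp only [mobiusPrimitiveCoeff]; push_cast; ring
  · simp only [mobiusPrimitiveCoeff]; push_cast; ring
end

section
/- Let ω ∈ 𝓑'₀ have power series expansion ω(z) = c₁z + c₂z² + c₃z³ + ⋯ on 𝔻. Then |c₁c₃ − c₂²| ≤ 1/4. -/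
/-!
With `f = ω'`, bounded by `1` on the disk, the function `z ↦ f z * f (-z)` is again bounded by `1`,
and its second derivative at `0` is `2 (f(0) f''(0) - f'(0)²) = 2 (6 c₁c₃ - 4 c₂²)`. Cauchy's
estimate therefore gives `|6 c₁c₃ - 4 c₂²| ≤ 1`, and also `|2 c₂| = |f'(0)| ≤ 1`. Writing
`c₁c₃ - c₂² = (6 c₁c₃ - 4 c₂²) / 6 - c₂² / 3` yields the bound `1/6 + 1/12 = 1/4`.
-/

open Complex Metric Filter Topology

theorem Complex.norm_iteratedDeriv_le_of_forall_mem_ball_norm_le {F : Type*}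
    [NormedAddCommGroup F] [NormedSpace ℂ F] [CompleteSpace F] {c : ℂ} {R C : ℝ} {f : ℂ → F}
    (n : ℕ) (hR : 0 < R) (hf : DifferentiableOn ℂ f (ball c R))
    (hC : ∀ z ∈ ball c R, ‖f z‖ ≤ C) :
    ‖iteratedDeriv n f c‖ ≤ n.factorial * C / R ^ n := by
  have hlim : Tendsto (fun r : ℝ => n.factorial * C / r ^ n) (𝓝[<] R)
      (𝓝 (n.factorial * C / R ^ n)) :=
    ((continuousAt_const.div (continuousAt_id.pow n) (pow_ne_zero n hR.ne')).tendsto).mono_left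
      nhdsWithin_le_nhds
  refine ge_of_tendsto hlim ?_
  filter_upwards [Ioo_mem_nhdsLT hR] with r ⟨hr0, hrR⟩
  exact norm_iteratedDeriv_le_of_forall_mem_sphere_norm_le n hr0
    (hf.diffContOnCl_ball (closedBall_subset_ball hrR))
    fun z hz => hC z (sphere_subset_ball hrR hz)

theorem FormalMultilinearSeries.hasFPowerSeriesOnBall_ofScalars_of_hasSum {𝕜 : Type*}
    [RCLike 𝕜] {f : 𝕜 → 𝕜} {a : ℕ → 𝕜} {R : NNReal} (hR : 0 < R)
    (hf : ∀ z ∈ ball (0 : 𝕜) R, HasSum (fun n => a n * z ^ n) (f z)) :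
    HasFPowerSeriesOnBall f (ofScalars 𝕜 a) 0 R := by
  refine ⟨?_, by simpa using hR, fun {y} hy => ?_⟩
  · refine ENNReal.le_of_forall_nnreal_lt fun r hr => ?_
    have hr' : ((r : ℝ) : 𝕜) ∈ ball (0 : 𝕜) R := by simpa using hr
    have ht : Tendsto (fun n => ‖ofScalars 𝕜 a n‖ * (r : ℝ) ^ n) atTop (𝓝 0) := by
      simpa using (hf _ hr').summable.tendsto_atTop_zero.norm
    exact le_radius_of_tendsto _ ht
  · have hy' : y ∈ ball (0 : 𝕜) R := by simpa using hy
    simpa [ofScalars_apply_eq, mul_comm] using hf y hy'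

section NontriviallyNormedField

variable {𝕜 : Type*} [NontriviallyNormedField 𝕜]

theorem HasFPowerSeriesAt.iteratedDeriv_eq_factorial_mul [CompleteSpace 𝕜] [CharZero 𝕜]
    {f : 𝕜 → 𝕜} {a : ℕ → 𝕜} {x : 𝕜}
    (hf : HasFPowerSeriesAt f (FormalMultilinearSeries.ofScalars 𝕜 a) x) (n : ℕ) :
    iteratedDeriv n f x = n.factorial * a n := by
  have h := hf.eq_formalMultilinearSeries hf.analyticAt.hasFPowerSeriesAt
  rw [FormalMultilinearSeries.ofScalars_series_eq_iff] at h
  rw [congr_fun h n, mul_div_cancel₀ _ (by exact_mod_cast n.factorial_ne_zero)]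

theorem iteratedDeriv_two_mul_comp_neg_zero {f : 𝕜 → 𝕜} (hf : ContDiffAt 𝕜 2 f 0) :
    iteratedDeriv 2 (fun z => f z * f (-z)) 0 =
      2 * (f 0 * iteratedDeriv 2 f 0 - deriv f 0 ^ 2) := by
  have hneg : ContDiffAt 𝕜 2 (fun z => f (-z)) 0 :=
    (by simpa using hf : ContDiffAt 𝕜 2 f (-0)).comp 0 contDiff_neg.contDiffAt
  rw [iteratedDeriv_fun_mul hf hneg]
  simp [Finset.sum_range_succ, iteratedDeriv_comp_neg, iteratedDeriv_one]
  ring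

end NontriviallyNormedField

theorem norm_mul_iteratedDeriv_two_sub_deriv_sq_le {f : ℂ → ℂ} {R C : ℝ} (hR : 0 < R)
    (hf : DifferentiableOn ℂ f (ball 0 R)) (hC : ∀ z ∈ ball 0 R, ‖f z‖ ≤ C) :
    ‖f 0 * iteratedDeriv 2 f 0 - deriv f 0 ^ 2‖ ≤ C ^ 2 / R ^ 2 := by
  have hneg : Set.MapsTo Neg.neg (ball (0 : ℂ) R) (ball 0 R) := fun z hz => by simpa using hz
  have hC0 : 0 ≤ C := (norm_nonneg _).trans (hC 0 (mem_ball_self hR))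
  have hH := norm_iteratedDeriv_le_of_forall_mem_ball_norm_le (f := fun z => f z * f (-z)) 2 hR
    (C := C ^ 2) (hf.mul (hf.comp (differentiableOn_neg _) hneg)) fun z hz => by
      rw [norm_mul, sq]
      exact mul_le_mul (hC z hz) (hC _ (hneg hz)) (norm_nonneg _) hC0
  rw [iteratedDeriv_two_mul_comp_neg_zero
    ((hf.analyticOnNhd isOpen_ball) 0 (mem_ball_self hR)).contDiffAt, norm_mul] at hH
  simpa [mul_div_assoc] using hH

theorem norm_mul_sub_sq_le_one_div_four {a b c : ℂ} (habc : ‖a * (6 * b) - (2 * c) ^ 2‖ ≤ 1)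
    (hc : ‖2 * c‖ ≤ 1) : ‖a * b - c ^ 2‖ ≤ 1 / 4 := by
  have hsplit : a * b - c ^ 2 = (a * (6 * b) - (2 * c) ^ 2) / 6 - (2 * c) ^ 2 / 12 := by ring
  calc ‖a * b - c ^ 2‖ ≤ ‖a * (6 * b) - (2 * c) ^ 2‖ / 6 + ‖2 * c‖ ^ 2 / 12 := by
        rw [hsplit]
        refine (norm_sub_le _ _).trans_eq ?_
        simp [norm_pow]
    _ ≤ 1 / 6 + 1 ^ 2 / 12 := by gcongr
    _ = 1 / 4 := by norm_num

theorem stmt_13_general (ω : ℂ → ℂ) (c : ℕ → ℂ)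
    (hb : ∀ z ∈ ball (0:ℂ) 1, ‖deriv ω z‖ ≤ 1)
    (hc : ∀ z ∈ ball (0:ℂ) 1, HasSum (fun n : ℕ => c (n + 1) * z ^ (n + 1)) (ω z)) :
    ‖c 1 * c 3 - c 2^2‖ ≤ 1/4 := by
  set a : ℕ → ℂ := Function.update c 0 0 with ha
  have hω : HasFPowerSeriesOnBall ω (FormalMultilinearSeries.ofScalars ℂ a) 0 1 :=
    FormalMultilinearSeries.hasFPowerSeriesOnBall_ofScalars_of_hasSum one_pos fun z hz =>
      (hasSum_nat_add_iff' 1).1 (by simpa [ha] using hc z (by simpa using hz))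
  have hdω : DifferentiableOn ℂ (deriv ω) (ball 0 1) :=
    (hω.differentiableOn.analyticOnNhd isOpen_eball).deriv.differentiableOn.mono
      fun z hz => by rwa [← ENNReal.coe_one, Metric.eball_coe, NNReal.coe_one]
  have hcoeff (n : ℕ) : iteratedDeriv n (deriv ω) 0 = (n + 1).factorial * c (n + 1) := by
    rw [← iteratedDeriv_succ', hω.hasFPowerSeriesAt.iteratedDeriv_eq_factorial_mul]
    simp [ha]
  have hc1 : deriv ω 0 = c 1 := by simpa using hcoeff 0
  have hc2 : deriv (deriv ω) 0 = 2 * c 2 := by simpa using hcoeff 1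
  have hc3 : iteratedDeriv 2 (deriv ω) 0 = 6 * c 3 := by simpa [Nat.factorial] using hcoeff 2
  have hderiv : ‖deriv (deriv ω) 0‖ ≤ 1 := by
    simpa using norm_iteratedDeriv_le_of_forall_mem_ball_norm_le 1 one_pos hdω hb
  have hprod := norm_mul_iteratedDeriv_two_sub_deriv_sq_le one_pos hdω hb
  rw [hc1, hc2, hc3, one_pow, div_one] at hprod
  rw [hc2] at hderiv
  exact norm_mul_sub_sq_le_one_div_four hprod hderiv

theorem stmt_13 (ω : ℂ → ℂ) (c : ℕ → ℂ)
    (hd : DifferentiableOn ℂ ω (ball 0 1))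
    (h0 : ω 0 = 0)
    (hb : ∀ z ∈ ball (0:ℂ) 1, ‖deriv ω z‖ ≤ 1)
    (hc : ∀ z ∈ ball (0:ℂ) 1, HasSum (fun n : ℕ => c (n + 1) * z ^ (n + 1)) (ω z)) :
    ‖c 1 * c 3 - c 2^2‖ ≤ 1/4 :=
  stmt_13_general ω c hb hc
end
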